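/- For every K ≥ 1 there is a constant C = C(K) > 0 with the following property. Suppose U⋆ is μ-incoherent, κ ≤ K, Ũ⋆ᵀŨ⋆ is invertible, and σ_r(Ũ⋆) ≥ λ_min^{⋆2/3}/2. Let V⋆ := Ũ⋆ (Ũ⋆ᵀŨ⋆)⁻¹ ∈ ℝ^{d²×r} with entries V⋆_{(i,j),l}. Then for every 1 ≤ l ≤ r: (i) ‖V⋆_{:,l} − ‖u_l⋆‖₂^{−4}·ũ_l⋆‖₂ ≤ C·μ r/(d·λ_min^{⋆2/3}), where ũ_l⋆ ∈ ℝ^{d²} is the l-th column of Ũ⋆ (the vectorization of u_l⋆ (u_l⋆)ᵀ); in particular | ‖V⋆_{:,l}‖₂ − ‖u_l⋆‖₂^{−2} | ≤ C·μ r/(d·λ_min^{⋆2/3}); (ii) ‖V⋆_{:,l}‖_∞ ≤ C·μ √r/(d·λ_min^{⋆2/3}); and (iii) for every 1 ≤ i ≤ d, Σ_{k=1}^d (V⋆_{(i,k),l})² ≤ C·μ r/(d·λ_min^{⋆4/3}). -/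

import Mathlib

noncomputable section

open MeasureTheory ProbabilityTheory Matrix

namespace TC

/-- Index triples for a `d × d × d` tensor. -/
abbrev Idx (d : ℕ) := Fin d × Fin d × Fin d

/-- Sort a triple of indices into nondecreasing order `(min, median, max)`. -/
def sort3 {d : ℕ} (t : Idx d) : Idx d :=
  (min t.1 (min t.2.1 t.2.2),
    max (min t.1 t.2.1) (min (max t.1 t.2.1) t.2.2),
    max t.1 (max t.2.1 t.2.2))

/-- A symmetric tensor determined by its values on sorted triples. -/
def symEntry {d : ℕ} {α : Type*} (e : Idx d → α) (t : Idx d) : α := e (sort3 t)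

/-- The CP tensor `∑_l u_l ⊗ u_l ⊗ u_l` built from the factor matrix `W`
(the `l`-th column of `W` is the factor `u_l`). -/
def cpTensor {d r : ℕ} (W : Matrix (Fin d) (Fin r) ℝ) (t : Idx d) : ℝ :=
  ∑ l : Fin r, W t.1 l * W t.2.1 l * W t.2.2 l

/-- Euclidean norm of a vector. -/
def norm2 {n : Type*} [Fintype n] (u : n → ℝ) : ℝ := Real.sqrt (∑ i, u i ^ 2)

/-- Sup-norm of a vector. -/
def normInf {n : Type*} [Fintype n] (u : n → ℝ) : ℝ := ⨆ i, |u i|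

/-- The `l`-th column of a factor matrix, i.e. the factor `u_l`. -/
def colU {d r : ℕ} (U : Matrix (Fin d) (Fin r) ℝ) (l : Fin r) : Fin d → ℝ := fun i => U i l

/-- `λ⋆_max = max_l ‖u_l⋆‖₂³`. -/
def lamMax {d r : ℕ} (U : Matrix (Fin d) (Fin r) ℝ) : ℝ := ⨆ l : Fin r, norm2 (colU U l) ^ 3

/-- `λ⋆_min = min_l ‖u_l⋆‖₂³`. -/
def lamMin {d r : ℕ} (U : Matrix (Fin d) (Fin r) ℝ) : ℝ := ⨅ l : Fin r, norm2 (colU U l) ^ 3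

/-- `μ`-incoherence of the factor matrix `U`. -/
def Incoherent {d r : ℕ} (μ : ℝ) (U : Matrix (Fin d) (Fin r) ℝ) : Prop :=
  (⨆ t : Idx d, |cpTensor U t|) ≤
      Real.sqrt (μ / (d : ℝ) ^ 3) * Real.sqrt (∑ t : Idx d, cpTensor U t ^ 2) ∧
  (∀ l, normInf (colU U l) ≤ Real.sqrt (μ / (d : ℝ)) * norm2 (colU U l)) ∧
  ∀ l j, l ≠ j →
    |∑ i, U i l * U i j| ≤ Real.sqrt (μ / (d : ℝ)) * (norm2 (colU U l) * norm2 (colU U j))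

/-- The lifted `d² × r` matrix `Ũ`, with `((i,j), l)` entry `u_{l,i} u_{l,j}`. -/
def lift {d r : ℕ} (U : Matrix (Fin d) (Fin r) ℝ) : Matrix (Fin d × Fin d) (Fin r) ℝ :=
  Matrix.of fun ij l => U ij.1 l * U ij.2 l

/-- `Ũᵀ Ũ`. -/
def gram {d r : ℕ} (U : Matrix (Fin d) (Fin r) ℝ) : Matrix (Fin r) (Fin r) ℝ :=
  (lift U)ᵀ * lift U

/-- The diagonal matrix `D_k⋆` of noise variances in the `k`-th slice. -/
def Dstar {d : ℕ} (σv : Fin d → Fin d → Fin d → ℝ) (k : Fin d) :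
    Matrix (Fin d × Fin d) (Fin d × Fin d) ℝ :=
  Matrix.diagonal fun ij => σv ij.1 ij.2 k ^ 2

/-- The covariance matrix `Σ_k⋆ = (2/p) (ŨᵀŨ)⁻¹ Ũᵀ D_k⋆ Ũ (ŨᵀŨ)⁻¹`. -/
def SigmaStar {d r : ℕ} (U : Matrix (Fin d) (Fin r) ℝ) (p : ℝ)
    (σv : Fin d → Fin d → Fin d → ℝ) (k : Fin d) : Matrix (Fin r) (Fin r) ℝ :=
  (2 / p) • ((gram U)⁻¹ * (lift U)ᵀ * Dstar σv k * lift U * (gram U)⁻¹)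

/-- Quadratic form `Ũ_{(i,j),:} Σ_m⋆ (Ũ_{(i,j),:})ᵀ`. -/
def qf {d r : ℕ} (U : Matrix (Fin d) (Fin r) ℝ) (p : ℝ)
    (σv : Fin d → Fin d → Fin d → ℝ) (m i j : Fin d) : ℝ :=
  ∑ a : Fin r, ∑ b : Fin r, lift U (i, j) a * SigmaStar U p σv m a b * lift U (i, j) b

/-- The variance parameters `v⋆_{i,j,k}` (symmetric in the indices). -/
def vstar {d r : ℕ} (U : Matrix (Fin d) (Fin r) ℝ) (p : ℝ)
    (σv : Fin d → Fin d → Fin d → ℝ) (i j k : Fin d) : ℝ :=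
  if i = j ∧ j = k then 9 * qf U p σv i i i
  else if i = j then 4 * qf U p σv i i k + qf U p σv k i i
  else if i = k then 4 * qf U p σv i i j + qf U p σv j i i
  else if j = k then 4 * qf U p σv j j i + qf U p σv i j j
  else qf U p σv i j k + qf U p σv j i k + qf U p σv k i j

/-- Bernoulli measure on `Bool` with success probability `p` (clipped at 1). -/
def bern (p : ℝ) : Measure Bool :=
  (PMF.bernoulli (min (Real.toNNReal p) 1) (min_le_right _ _)).toMeasure

/-- The random symmetric sampling pattern: independent Bernoulli(p) indicators for the
sorted triples, symmetrized through `symEntry`/`sort3`. -/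
def sampleMeasure (d : ℕ) (p : ℝ) : Measure (Idx d → Bool) :=
  Measure.pi fun _ => bern p

/-- i.i.d. Gaussian noise with variance `v` on the sorted triples, symmetrized through
`symEntry`/`sort3`. -/
def noiseMeasure (d : ℕ) (v : NNReal) : Measure (Idx d → ℝ) :=
  Measure.pi fun _ => gaussianReal 0 v

/-- The indicator `χ_{i,j,k}` of the (symmetrized) sampling set. -/
def chi {d : ℕ} (S : Idx d → Bool) (t : Idx d) : ℝ := if symEntry S t then 1 else 0

/-- The observed (masked) tensor `𝒫_Ω(W♯ + E)` for ground truth `W` and noise `e`. -/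
def obs {d r : ℕ} (S : Idx d → Bool) (W : Matrix (Fin d) (Fin r) ℝ) (e : Idx d → ℝ) :
    Idx d → ℝ :=
  fun t => if symEntry S t then cpTensor W t + symEntry e t else 0

/-- The sorted triples `i ≤ j ≤ k`. -/
def sortedTriples (d : ℕ) : Finset (Idx d) :=
  Finset.univ.filter fun t => t.1 ≤ t.2.1 ∧ t.2.1 ≤ t.2.2

/-- The vector `h_{i,j,k} ∈ ℝ^{dr}` with `(l, s)` entry
`u⋆_{l,j}u⋆_{l,k}·1{i=s} + u⋆_{l,i}u⋆_{l,k}·1{j=s} + u⋆_{l,i}u⋆_{l,j}·1{k=s}`. -/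
def hvec {d r : ℕ} (U : Matrix (Fin d) (Fin r) ℝ) (t : Idx d) : Fin r × Fin d → ℝ :=
  fun ls =>
    (if t.1 = ls.2 then U t.2.1 ls.1 * U t.2.2 ls.1 else 0) +
      (if t.2.1 = ls.2 then U t.1 ls.1 * U t.2.2 ls.1 else 0) +
      (if t.2.2 = ls.2 then U t.1 ls.1 * U t.2.1 ls.1 else 0)

/-- Spectral norm of a square matrix: `sup_{‖x‖₂ ≤ 1} ‖A x‖₂`. -/
def specNorm {n : Type*} [Fintype n] (A : Matrix n n ℝ) : ℝ :=
  ⨆ x : { x : n → ℝ // ∑ i, x i ^ 2 ≤ 1 }, Real.sqrt (∑ i, A.mulVec x.1 i ^ 2)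

/-- `V⋆ = Ũ (ŨᵀŨ)⁻¹`. -/
def Vmat {d r : ℕ} (U : Matrix (Fin d) (Fin r) ℝ) : Matrix (Fin d × Fin d) (Fin r) ℝ :=
  lift U * (gram U)⁻¹

/-- `P⋆ = Ũ (ŨᵀŨ)⁻¹ Ũᵀ`. -/
def Pmat {d r : ℕ} (U : Matrix (Fin d) (Fin r) ℝ) :
    Matrix (Fin d × Fin d) (Fin d × Fin d) ℝ :=
  lift U * (gram U)⁻¹ * (lift U)ᵀ

/-- The random matrix `S_m⋆` built from the sampling pattern `S`. -/
def SstarMat {d r : ℕ} (U : Matrix (Fin d) (Fin r) ℝ) (p : ℝ)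
    (σv : Fin d → Fin d → Fin d → ℝ) (S : Idx d → Bool) (m : Fin d) :
    Matrix (Fin r) (Fin r) ℝ :=
  Matrix.of fun a b =>
    2 / p ^ 2 * ∑ i : Fin d, ∑ j : Fin d,
      σv i j m ^ 2 * chi S (i, j, m) * (∑ l, (gram U)⁻¹ a l * lift U (i, j) l) *
        (∑ l, (gram U)⁻¹ b l * lift U (i, j) l)

/-- The row vector `z_{i,j,k} = p⁻¹ E_{i,j,k} χ_{i,j,k} Ũ_{(i,j),:} (ŨᵀŨ)⁻¹`, as a function of a
joint sampling/noise outcome `ω`. -/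
def zEntry {d r : ℕ} (U : Matrix (Fin d) (Fin r) ℝ) (p : ℝ)
    (ω : (Idx d → Bool) × (Idx d → ℝ)) (i j k : Fin d) : Fin r → ℝ :=
  fun l => p⁻¹ * symEntry ω.2 (i, j, k) * chi ω.1 (i, j, k) *
    ∑ a, lift U (i, j) a * (gram U)⁻¹ a l

/-- The random matrix `X` with rows `X_{m,:} = ∑_{i,j} z_{i,j,m}`. -/
def Xmat {d r : ℕ} (U : Matrix (Fin d) (Fin r) ℝ) (p : ℝ)
    (ω : (Idx d → Bool) × (Idx d → ℝ)) : Fin d → Fin r → ℝ :=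
  fun m l => ∑ i : Fin d, ∑ j : Fin d, zEntry U p ω i j m l

/-- The random matrix `Z` with rows `Z_{k,:} = √2 ∑_i z_{i,i,k} + 2 ∑_{i<j} z_{i,j,k}`. -/
def Zmat {d r : ℕ} (U : Matrix (Fin d) (Fin r) ℝ) (p : ℝ)
    (ω : (Idx d → Bool) × (Idx d → ℝ)) : Fin d → Fin r → ℝ :=
  fun k l =>
    Real.sqrt 2 * ∑ i : Fin d, zEntry U p ω i i k l +
      2 * ∑ i : Fin d, ∑ j : Fin d, if i < j then zEntry U p ω i j k l else 0

/-- Standard normal CDF `Φ`. -/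
def stdGaussCDF (τ : ℝ) : ℝ := (gaussianReal 0 1 (Set.Iic τ)).toReal

/-- Update the `(s, l)` entry of a matrix to the value `x`. -/
def updEntry {d r : ℕ} (U : Matrix (Fin d) (Fin r) ℝ) (s : Fin d) (l : Fin r) (x : ℝ) :
    Matrix (Fin d) (Fin r) ℝ :=
  Matrix.of fun i l' => if i = s ∧ l' = l then x else U i l'

/-- The score vector `g = σ⁻² ∑_{i≤j≤k} χ_{ijk} E_{ijk} h_{ijk}`. -/
def gvec {d r : ℕ} (U : Matrix (Fin d) (Fin r) ℝ) (σ : ℝ) (S : Finset (Idx d))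
    (e : Idx d → ℝ) : Fin r × Fin d → ℝ :=
  fun ls => (σ ^ 2)⁻¹ *
    ∑ t ∈ sortedTriples d, (if t ∈ S then (1 : ℝ) else 0) * symEntry e t * hvec U t ls

/-- The covariance matrix `S_l⋆` of the `l`-th column of the Gaussian part of the error,
for product-form noise levels `σ_{ijk} = s_i s_j s_k`. -/
def SlMat {d r : ℕ} (U : Matrix (Fin d) (Fin r) ℝ) (p : ℝ) (s : Fin d → ℝ) (l : Fin r) :
    Matrix (Fin d) (Fin d) ℝ :=
  Matrix.of fun i j =>
    if i = j then
      2 * ∑ k₁ : Fin d, ∑ k₂ : Fin d, p⁻¹ * (s i * s k₁ * s k₂) ^ 2 * Vmat U (k₁, k₂) l ^ 2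
    else
      4 * (∑ k : Fin d, p⁻¹ * (s i * s j * s k) ^ 2 * Vmat U (i, k) l * Vmat U (j, k) l) -
        (4 - 2 * Real.sqrt 2) * p⁻¹ * (s i * s i * s j) ^ 2 * Vmat U (i, i) l * Vmat U (i, j) l -
        (4 - 2 * Real.sqrt 2) * p⁻¹ * (s i * s j * s j) ^ 2 * Vmat U (j, j) l * Vmat U (i, j) l

/-- Spectral norm of an order-3 tensor: `sup_{‖x‖=‖y‖=‖z‖=1} ⟨T, x⊗y⊗z⟩`. -/
def tSpec {d : ℕ} (T : Idx d → ℝ) : ℝ :=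
  ⨆ v : { v : (Fin d → ℝ) × (Fin d → ℝ) × (Fin d → ℝ) //
      norm2 v.1 = 1 ∧ norm2 v.2.1 = 1 ∧ norm2 v.2.2 = 1 },
    ∑ t : Idx d, T t * v.1.1 t.1 * v.1.2.1 t.2.1 * v.1.2.2 t.2.2


/-!
Write `Ũ = lift U` and `G = ŨᵀŨ = gram U`, so that `V⋆ = Ũ G⁻¹`. If `s‖x‖ ≤ ‖Ũx‖` for all `x`,
then `s²‖G⁻¹y‖ ≤ ‖y‖` and `s‖ŨG⁻¹y‖ ≤ ‖y‖`; here `s = λ_min^{2/3}/2`. Incoherence makes `G` nearly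
diagonal: `G_ll = ‖u_l‖⁴` and `|G_al| ≤ (μ/d)‖u_a‖²‖u_l‖²`. Hence
`V⋆_{:,l} - ‖u_l‖⁻⁴ũ_l = ŨG⁻¹y` with `y = e_l - ‖u_l‖⁻⁴ G e_l`, whose entries are at most `κμ/d`,
which gives (i). For (ii) and (iii), expand `V⋆_{(i,k),l} = ∑_a u_{a,i} u_{a,k} (G⁻¹)_{al}` and
combine the entrywise incoherence bound with `∑_a |(G⁻¹)_{al}| ≤ √r ‖G⁻¹e_l‖ ≤ √r/s²`.
-/

section Norm2

variable {n : Type*} [Fintype n]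

theorem norm2_eq_norm (u : n → ℝ) : norm2 u = ‖WithLp.toLp 2 u‖ := by
  simp [norm2, EuclideanSpace.norm_eq, sq_abs]

theorem norm2_nonneg (u : n → ℝ) : 0 ≤ norm2 u := Real.sqrt_nonneg _

theorem sq_norm2 (u : n → ℝ) : norm2 u ^ 2 = ∑ i, u i ^ 2 :=
  Real.sq_sqrt (Finset.sum_nonneg fun i _ => sq_nonneg (u i))

theorem abs_norm2_sub_norm2_le (u v : n → ℝ) : |norm2 u - norm2 v| ≤ norm2 (u - v) := by
  simpa only [norm2_eq_norm, WithLp.toLp_sub] using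
    abs_norm_sub_norm_le (WithLp.toLp 2 u) (WithLp.toLp 2 v)

theorem norm2_sum_le {ι : Type*} [Fintype ι] (F : ι → n → ℝ) :
    norm2 (∑ a, F a) ≤ ∑ a, norm2 (F a) := by
  simpa only [norm2_eq_norm, WithLp.toLp_sum] using
    norm_sum_le Finset.univ fun a => WithLp.toLp 2 (F a)

theorem norm2_smul (c : ℝ) (u : n → ℝ) : norm2 (c • u) = |c| * norm2 u := by
  simp only [norm2_eq_norm, WithLp.toLp_smul, norm_smul, Real.norm_eq_abs]

theorem dotProduct_le_norm2_mul_norm2 (u v : n → ℝ) : u ⬝ᵥ v ≤ norm2 u * norm2 v :=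
  Real.sum_mul_le_sqrt_mul_sqrt _ u v

theorem sum_abs_le_sqrt_card_mul_norm2 (u : n → ℝ) :
    ∑ i, |u i| ≤ √(Fintype.card n) * norm2 u := by
  simpa [norm2, sq_abs] using Real.sum_mul_le_sqrt_mul_sqrt Finset.univ (fun _ => 1) fun i => |u i|

theorem norm2_le_sqrt_card_mul {u : n → ℝ} {b : ℝ} (h : ∀ i, |u i| ≤ b) :
    norm2 u ≤ √(Fintype.card n) * b := by
  rcases isEmpty_or_nonempty n with _ | ⟨⟨i₀⟩⟩
  · simp [norm2]
  have hb : 0 ≤ b := (abs_nonneg _).trans (h i₀)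
  calc norm2 u ≤ √(Fintype.card n * b ^ 2) := by
        refine Real.sqrt_le_sqrt ((Finset.sum_le_sum fun i _ => sq_le_sq' (abs_le.mp (h i)).1
          (abs_le.mp (h i)).2).trans_eq ?_)
        simp
    _ = √(Fintype.card n) * b := by rw [Real.sqrt_mul (Nat.cast_nonneg _), Real.sqrt_sq hb]

end Norm2

section Gram

variable {m n : Type*} [Fintype m] [Fintype n]

theorem sum_mulVec_sq (A : Matrix m n ℝ) (x : n → ℝ) :
    ∑ i, (A *ᵥ x) i ^ 2 = x ⬝ᵥ (Aᵀ * A) *ᵥ x := by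
  rw [← mulVec_mulVec, dotProduct_mulVec, vecMul_transpose]
  simp only [dotProduct, sq]

variable [DecidableEq n]

theorem sq_norm2_mulVec_inv_gram_mulVec_le {A : Matrix m n ℝ} (hdet : IsUnit (Aᵀ * A).det)
    (y : n → ℝ) :
    norm2 (A *ᵥ (Aᵀ * A)⁻¹ *ᵥ y) ^ 2 ≤ norm2 ((Aᵀ * A)⁻¹ *ᵥ y) * norm2 y := by
  rw [sq_norm2, sum_mulVec_sq, mulVec_mulVec, mul_nonsing_inv _ hdet, one_mulVec]
  exact dotProduct_le_norm2_mul_norm2 _ _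

variable {A : Matrix m n ℝ} {s : ℝ}

theorem norm2_inv_gram_mulVec_le (hA : ∀ x, s ^ 2 * ∑ i, x i ^ 2 ≤ ∑ i, (A *ᵥ x) i ^ 2)
    (hdet : IsUnit (Aᵀ * A).det) (y : n → ℝ) :
    s ^ 2 * norm2 ((Aᵀ * A)⁻¹ *ᵥ y) ≤ norm2 y := by
  set x := (Aᵀ * A)⁻¹ *ᵥ y
  have hx : s ^ 2 * norm2 x ^ 2 ≤ norm2 x * norm2 y := by
    rw [sq_norm2]
    exact (hA x).trans (by simpa only [sq_norm2] using sq_norm2_mulVec_inv_gram_mulVec_le hdet y)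
  rcases (norm2_nonneg x).eq_or_lt with hx0 | hx0
  · rw [← hx0, mul_zero]
    exact norm2_nonneg y
  · nlinarith

theorem norm2_mulVec_inv_gram_mulVec_le (hs : 0 ≤ s)
    (hA : ∀ x, s ^ 2 * ∑ i, x i ^ 2 ≤ ∑ i, (A *ᵥ x) i ^ 2) (hdet : IsUnit (Aᵀ * A).det)
    (y : n → ℝ) :
    s * norm2 (A *ᵥ (Aᵀ * A)⁻¹ *ᵥ y) ≤ norm2 y := by
  refine (pow_le_pow_iff_left₀ (mul_nonneg hs (norm2_nonneg _))
    (norm2_nonneg y) two_ne_zero).mp ?_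
  calc (s * norm2 (A *ᵥ (Aᵀ * A)⁻¹ *ᵥ y)) ^ 2
      ≤ s ^ 2 * norm2 ((Aᵀ * A)⁻¹ *ᵥ y) * norm2 y := by
        rw [mul_pow, mul_assoc]
        exact mul_le_mul_of_nonneg_left (sq_norm2_mulVec_inv_gram_mulVec_le hdet y) (sq_nonneg s)
    _ ≤ norm2 y ^ 2 := by
        rw [sq (norm2 y)]
        exact mul_le_mul_of_nonneg_right (norm2_inv_gram_mulVec_le hA hdet y) (norm2_nonneg y)

end Gram

theorem mul_inv_col_eq_mulVec {m n : Type*} [Fintype n] [DecidableEq n] (A : Matrix m n ℝ)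
    (G : Matrix n n ℝ) (l : n) : (A * G⁻¹).col l = A *ᵥ G⁻¹ *ᵥ Pi.single l 1 := by
  rw [mulVec_mulVec, mulVec_single_one]

theorem mul_inv_col_sub_smul_col {m n : Type*} [Fintype n] [DecidableEq n] (A : Matrix m n ℝ)
    {G : Matrix n n ℝ} (hG : IsUnit G.det) (c : ℝ) (l : n) :
    (A * G⁻¹).col l - c • A.col l = A *ᵥ G⁻¹ *ᵥ (Pi.single l 1 - c • G.col l) := by
  rw [← mulVec_single_one G, mulVec_sub, mulVec_smul, mulVec_mulVec _ G⁻¹ G, nonsing_inv_mul _ hG,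
    one_mulVec, mulVec_sub, mulVec_smul, mul_inv_col_eq_mulVec, mulVec_single_one,
    mulVec_single_one]

section Factors

variable {d r : ℕ} {μ K : ℝ} {U : Matrix (Fin d) (Fin r) ℝ}

theorem gram_apply (U : Matrix (Fin d) (Fin r) ℝ) (a b : Fin r) :
    gram U a b = (∑ i, U i a * U i b) ^ 2 := by
  simp only [gram, mul_apply, transpose_apply, lift, of_apply, Fintype.sum_prod_type, sq,
    Finset.sum_mul_sum]
  exact Finset.sum_congr rfl fun i _ => Finset.sum_congr rfl fun j _ => by ring

theorem gram_self (U : Matrix (Fin d) (Fin r) ℝ) (a : Fin r) :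
    gram U a a = norm2 (colU U a) ^ 4 := by
  rw [gram_apply, show norm2 (colU U a) ^ 4 = (norm2 (colU U a) ^ 2) ^ 2 by ring, sq_norm2]
  simp only [colU, sq]

theorem norm2_lift_col (U : Matrix (Fin d) (Fin r) ℝ) (a : Fin r) :
    norm2 ((lift U).col a) = norm2 (colU U a) ^ 2 := by
  have h : norm2 ((lift U).col a) ^ 2 = (norm2 (colU U a) ^ 2) ^ 2 := by
    rw [sq_norm2, ← pow_mul, ← gram_self U a]
    simp only [gram, mul_apply, transpose_apply, col_apply, sq]
  exact (pow_left_inj₀ (norm2_nonneg _) (sq_nonneg _) two_ne_zero).mp h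

theorem Incoherent.abs_le (hU : Incoherent μ U) (i : Fin d) (a : Fin r) :
    |U i a| ≤ √(μ / d) * norm2 (colU U a) :=
  (le_ciSup (Finite.bddAbove_range fun i => |colU U a i|) i).trans (hU.2.1 a)

theorem Incoherent.div_pos (hU : Incoherent μ U) {a : Fin r} (ha : 0 < norm2 (colU U a)) :
    0 < μ / d := by
  obtain ⟨i, hi⟩ : ∃ i, U i a ≠ 0 := by
    by_contra! h
    simp [norm2, colU, h] at ha
  have h := (abs_pos.mpr hi).trans_le (hU.abs_le i a)
  exact Real.sqrt_pos.mp (pos_of_mul_pos_left h (norm2_nonneg _))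

theorem Incoherent.natCast_pos (hU : Incoherent μ U) {a : Fin r} (ha : 0 < norm2 (colU U a)) :
    0 < (d : ℝ) :=
  d.cast_nonneg.lt_of_ne fun h => by simpa [← h] using hU.div_pos ha

theorem Incoherent.pos (hU : Incoherent μ U) {a : Fin r} (ha : 0 < norm2 (colU U a)) : 0 < μ :=
  (div_pos_iff_of_pos_right (hU.natCast_pos ha)).mp (hU.div_pos ha)

theorem Incoherent.abs_lift_le (hU : Incoherent μ U) (hμ : 0 ≤ μ / d) (ij : Fin d × Fin d)
    (a : Fin r) : |lift U ij a| ≤ μ / d * norm2 (colU U a) ^ 2 := by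
  calc |lift U ij a| = |U ij.1 a| * |U ij.2 a| := abs_mul _ _
    _ ≤ (√(μ / d) * norm2 (colU U a)) * (√(μ / d) * norm2 (colU U a)) :=
        mul_le_mul (hU.abs_le _ a) (hU.abs_le _ a) (abs_nonneg _)
          (mul_nonneg (Real.sqrt_nonneg _) (norm2_nonneg _))
    _ = μ / d * norm2 (colU U a) ^ 2 := by
        rw [mul_mul_mul_comm, Real.mul_self_sqrt hμ, sq]

theorem Incoherent.abs_gram_le (hU : Incoherent μ U) (hμ : 0 ≤ μ / d) {a b : Fin r}
    (hab : a ≠ b) : |gram U a b| ≤ μ / d * (norm2 (colU U a) ^ 2 * norm2 (colU U b) ^ 2) := by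
  rw [gram_apply, abs_pow]
  calc |∑ i, U i a * U i b| ^ 2 ≤ (√(μ / d) * (norm2 (colU U a) * norm2 (colU U b))) ^ 2 :=
        pow_le_pow_left₀ (abs_nonneg _) (hU.2.2 a b hab) 2
    _ = μ / d * (norm2 (colU U a) ^ 2 * norm2 (colU U b) ^ 2) := by
        rw [mul_pow, Real.sq_sqrt hμ, mul_pow]

theorem rpow_two_div_three_pow_three {x : ℝ} (hx : 0 ≤ x) : (x ^ 3) ^ ((2 : ℝ) / 3) = x ^ 2 := by
  rw [← Real.rpow_natCast x 3, ← Real.rpow_mul hx, ← Real.rpow_natCast x 2]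
  norm_num

theorem lamMin_rpow_le_sq_norm2 (U : Matrix (Fin d) (Fin r) ℝ) (a : Fin r) :
    lamMin U ^ ((2 : ℝ) / 3) ≤ norm2 (colU U a) ^ 2 := by
  have hmin : lamMin U ≤ norm2 (colU U a) ^ 3 := ciInf_le (Finite.bddBelow_range _) a
  have hmin0 : 0 ≤ lamMin U := Real.iInf_nonneg fun b => pow_nonneg (norm2_nonneg _) 3
  rw [← rpow_two_div_three_pow_three (norm2_nonneg _)]
  exact Real.rpow_le_rpow hmin0 hmin (by norm_num)

theorem norm2_colU_pos (hlam : 0 < lamMin U) (a : Fin r) : 0 < norm2 (colU U a) :=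
  lt_of_pow_lt_pow_left₀ 2 (norm2_nonneg _)
    (by simpa using (Real.rpow_pos_of_pos hlam _).trans_le (lamMin_rpow_le_sq_norm2 U a))

theorem sq_norm2_le_mul_lamMin_rpow (hK : 1 ≤ K) (hκ : lamMax U ≤ K * lamMin U) (a : Fin r) :
    norm2 (colU U a) ^ 2 ≤ K * lamMin U ^ ((2 : ℝ) / 3) := by
  have hmax : norm2 (colU U a) ^ 3 ≤ K * lamMin U :=
    (le_ciSup (Finite.bddAbove_range fun b => norm2 (colU U b) ^ 3) a).trans hκ
  have hmin0 : 0 ≤ lamMin U := Real.iInf_nonneg fun b => pow_nonneg (norm2_nonneg _) 3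
  calc norm2 (colU U a) ^ 2 ≤ (K * lamMin U) ^ ((2 : ℝ) / 3) := by
        rw [← rpow_two_div_three_pow_three (norm2_nonneg _)]
        exact Real.rpow_le_rpow (pow_nonneg (norm2_nonneg _) 3) hmax (by norm_num)
    _ = K ^ ((2 : ℝ) / 3) * lamMin U ^ ((2 : ℝ) / 3) := Real.mul_rpow (by linarith) hmin0
    _ ≤ K * lamMin U ^ ((2 : ℝ) / 3) := by
        gcongr
        exact Real.rpow_le_self_of_one_le hK (by norm_num)

end Factors

section Columns

variable {d r : ℕ} {μ K s : ℝ} {U : Matrix (Fin d) (Fin r) ℝ}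

theorem Incoherent.norm2_single_sub_gram_col_le (hU : Incoherent μ U) {l : Fin r}
    (hl : 0 < norm2 (colU U l)) (hKl : ∀ a, norm2 (colU U a) ^ 2 ≤ K * norm2 (colU U l) ^ 2) :
    norm2 (Pi.single l 1 - (norm2 (colU U l) ^ 4)⁻¹ • (gram U).col l) ≤ √r * (K * μ / d) := by
  have hμ := hU.div_pos hl
  have hK : 0 ≤ K := by nlinarith [hKl l, pow_pos hl 2]
  suffices h : ∀ a,
      |((Pi.single l 1 - (norm2 (colU U l) ^ 4)⁻¹ • (gram U).col l : Fin r → ℝ)) a| ≤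
      K * μ / d by simpa using norm2_le_sqrt_card_mul h
  intro a
  rcases eq_or_ne a l with rfl | hal
  · rw [Pi.sub_apply, Pi.single_eq_same, Pi.smul_apply, col_apply, gram_self, smul_eq_mul,
      inv_mul_cancel₀ (pow_pos hl 4).ne', sub_self, abs_zero]
    exact div_nonneg (mul_nonneg hK (hU.pos hl).le) d.cast_nonneg
  rw [Pi.sub_apply, Pi.single_eq_of_ne hal, Pi.smul_apply, col_apply, smul_eq_mul, zero_sub,
    abs_neg, abs_mul, abs_inv, abs_of_pos (by positivity), inv_mul_le_iff₀ (by positivity)]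
  calc |gram U a l| ≤ μ / d * (norm2 (colU U a) ^ 2 * norm2 (colU U l) ^ 2) :=
        hU.abs_gram_le hμ.le hal
    _ ≤ μ / d * (K * norm2 (colU U l) ^ 2 * norm2 (colU U l) ^ 2) := by
        gcongr
        exact hKl a
    _ = norm2 (colU U l) ^ 4 * (K * μ / d) := by ring

theorem Incoherent.norm2_vmat_col_sub_le (hU : Incoherent μ U) (hs : 0 ≤ s)
    (hσ : ∀ x, s ^ 2 * ∑ a, x a ^ 2 ≤ ∑ ij, (lift U *ᵥ x) ij ^ 2) (hdet : IsUnit (gram U).det)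
    {l : Fin r} (hl : 0 < norm2 (colU U l))
    (hKl : ∀ a, norm2 (colU U a) ^ 2 ≤ K * norm2 (colU U l) ^ 2) :
    s * norm2 ((Vmat U).col l - (norm2 (colU U l) ^ 4)⁻¹ • (lift U).col l) ≤
      √r * (K * μ / d) := by
  rw [Vmat, mul_inv_col_sub_smul_col _ hdet]
  exact (norm2_mulVec_inv_gram_mulVec_le hs hσ hdet _).trans
    (hU.norm2_single_sub_gram_col_le hl hKl)

theorem sum_sq_norm2_mul_abs_inv_gram_le {B : ℝ}
    (hσ : ∀ x, s ^ 2 * ∑ a, x a ^ 2 ≤ ∑ ij, (lift U *ᵥ x) ij ^ 2) (hdet : IsUnit (gram U).det)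
    (hB : ∀ a, norm2 (colU U a) ^ 2 ≤ B) (l : Fin r) :
    s ^ 2 * ∑ a, norm2 (colU U a) ^ 2 * |(gram U)⁻¹ a l| ≤ √r * B := by
  set x := ((gram U)⁻¹).col l
  have hx : s ^ 2 * norm2 x ≤ 1 := by
    have h := norm2_inv_gram_mulVec_le hσ hdet (Pi.single l 1)
    rwa [mulVec_single_one, show norm2 (Pi.single l (1 : ℝ)) = 1 by simp [norm2, Pi.single_apply]]
      at h
  have hB0 : 0 ≤ B := (sq_nonneg _).trans (hB l)
  calc s ^ 2 * ∑ a, norm2 (colU U a) ^ 2 * |x a| ≤ s ^ 2 * (B * ∑ a, |x a|) := by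
        rw [Finset.mul_sum _ _ B]
        gcongr with a
        exact hB a
    _ ≤ s ^ 2 * (B * (√r * norm2 x)) := by
        gcongr
        simpa using sum_abs_le_sqrt_card_mul_norm2 x
    _ = √r * B * (s ^ 2 * norm2 x) := by ring
    _ ≤ √r * B := mul_le_of_le_one_right (by positivity) hx

theorem Incoherent.abs_vmat_le (hU : Incoherent μ U) (hμ : 0 ≤ μ / d) (ij : Fin d × Fin d)
    (l : Fin r) :
    |Vmat U ij l| ≤ μ / d * ∑ a, norm2 (colU U a) ^ 2 * |(gram U)⁻¹ a l| := by
  calc |Vmat U ij l| = |∑ a, lift U ij a * (gram U)⁻¹ a l| := rfl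
    _ ≤ ∑ a, |lift U ij a| * |(gram U)⁻¹ a l| := by
        simpa only [abs_mul] using
          Finset.abs_sum_le_sum_abs (fun a => lift U ij a * (gram U)⁻¹ a l) Finset.univ
    _ ≤ ∑ a, μ / d * norm2 (colU U a) ^ 2 * |(gram U)⁻¹ a l| := by
        gcongr with a
        exact hU.abs_lift_le hμ ij a
    _ = μ / d * ∑ a, norm2 (colU U a) ^ 2 * |(gram U)⁻¹ a l| := by
        simp only [Finset.mul_sum, mul_assoc]

theorem Incoherent.norm2_vmat_row_le (hU : Incoherent μ U) (i : Fin d) (l : Fin r) :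
    norm2 (fun k => Vmat U (i, k) l) ≤
      √(μ / d) * ∑ a, norm2 (colU U a) ^ 2 * |(gram U)⁻¹ a l| := by
  have hrow : (fun k => Vmat U (i, k) l) = ∑ a, (U i a * (gram U)⁻¹ a l) • colU U a := by
    ext k
    simp only [Vmat, mul_apply, lift, of_apply, Finset.sum_apply, Pi.smul_apply, colU,
      smul_eq_mul]
    exact Finset.sum_congr rfl fun a _ => by ring
  calc norm2 (fun k => Vmat U (i, k) l)
      ≤ ∑ a, |U i a| * |(gram U)⁻¹ a l| * norm2 (colU U a) := by
        simpa only [hrow, norm2_smul, abs_mul] using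
          norm2_sum_le fun a => (U i a * (gram U)⁻¹ a l) • colU U a
    _ ≤ ∑ a, √(μ / d) * norm2 (colU U a) * |(gram U)⁻¹ a l| * norm2 (colU U a) := by
        gcongr with a
        exacts [norm2_nonneg _, hU.abs_le i a]
    _ = √(μ / d) * ∑ a, norm2 (colU U a) ^ 2 * |(gram U)⁻¹ a l| := by
        rw [Finset.mul_sum]
        exact Finset.sum_congr rfl fun a _ => by ring

theorem abs_norm2_vmat_col_sub_le {l : Fin r} (hl : 0 < norm2 (colU U l)) :
    |norm2 ((Vmat U).col l) - (norm2 (colU U l) ^ 2)⁻¹| ≤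
      norm2 ((Vmat U).col l - (norm2 (colU U l) ^ 4)⁻¹ • (lift U).col l) := by
  have h := abs_norm2_sub_norm2_le ((Vmat U).col l) ((norm2 (colU U l) ^ 4)⁻¹ • (lift U).col l)
  rwa [norm2_smul, norm2_lift_col, abs_inv, abs_pow, abs_of_pos hl,
    show (norm2 (colU U l) ^ 4)⁻¹ * norm2 (colU U l) ^ 2 = (norm2 (colU U l) ^ 2)⁻¹ by
      field_simp] at h

end Columns

section Normalized

-- The normalisation of the theorem: `s = L / 2` with `L = λ_min^{2/3}`, and `‖u_a‖² ≤ K L`.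
variable {d r : ℕ} {μ K L : ℝ} {U : Matrix (Fin d) (Fin r) ℝ}

theorem sum_sq_norm2_mul_abs_inv_gram_le_of_lower (hL : 0 < L)
    (hσ : ∀ x, (L / 2) ^ 2 * ∑ a, x a ^ 2 ≤ ∑ ij, (lift U *ᵥ x) ij ^ 2)
    (hdet : IsUnit (gram U).det) (hup : ∀ a, norm2 (colU U a) ^ 2 ≤ K * L) (l : Fin r) :
    ∑ a, norm2 (colU U a) ^ 2 * |(gram U)⁻¹ a l| ≤ 4 * K * √r / L := by
  have h := sum_sq_norm2_mul_abs_inv_gram_le hσ hdet hup l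
  rw [le_div_iff₀ hL]
  nlinarith

theorem Incoherent.norm2_vmat_col_sub_le_of_lower (hU : Incoherent μ U) (hL : 0 < L)
    (hσ : ∀ x, (L / 2) ^ 2 * ∑ a, x a ^ 2 ≤ ∑ ij, (lift U *ᵥ x) ij ^ 2)
    (hdet : IsUnit (gram U).det) {l : Fin r} (hl : 0 < norm2 (colU U l))
    (hKl : ∀ a, norm2 (colU U a) ^ 2 ≤ K * norm2 (colU U l) ^ 2) :
    norm2 ((Vmat U).col l - (norm2 (colU U l) ^ 4)⁻¹ • (lift U).col l) ≤
      2 * K * μ * √r / (d * L) := by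
  have h := hU.norm2_vmat_col_sub_le (by positivity) hσ hdet hl hKl
  rw [mul_div_assoc', le_div_iff₀ (hU.natCast_pos hl)] at h
  rw [le_div_iff₀ (mul_pos (hU.natCast_pos hl) hL)]
  linarith

theorem Incoherent.abs_vmat_le_of_lower (hU : Incoherent μ U) {l : Fin r}
    (hl : 0 < norm2 (colU U l))
    (hsum : ∑ a, norm2 (colU U a) ^ 2 * |(gram U)⁻¹ a l| ≤ 4 * K * √r / L)
    (ij : Fin d × Fin d) : |Vmat U ij l| ≤ 4 * K * μ * √r / (d * L) := by
  calc |Vmat U ij l| ≤ μ / d * (4 * K * √r / L) :=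
        (hU.abs_vmat_le (hU.div_pos hl).le ij l).trans (by gcongr; exact (hU.div_pos hl).le)
    _ = 4 * K * μ * √r / (d * L) := by ring

theorem Incoherent.sum_vmat_row_sq_le_of_lower (hU : Incoherent μ U) {l : Fin r}
    (hl : 0 < norm2 (colU U l))
    (hsum : ∑ a, norm2 (colU U a) ^ 2 * |(gram U)⁻¹ a l| ≤ 4 * K * √r / L) (i : Fin d) :
    ∑ k, Vmat U (i, k) l ^ 2 ≤ 16 * K ^ 2 * μ * r / (d * L ^ 2) := by
  have hμ := (hU.div_pos hl).le
  calc ∑ k, Vmat U (i, k) l ^ 2 = norm2 (fun k => Vmat U (i, k) l) ^ 2 := (sq_norm2 _).symm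
    _ ≤ (√(μ / d) * (4 * K * √r / L)) ^ 2 := by
        gcongr
        exacts [norm2_nonneg _, (hU.norm2_vmat_row_le i l).trans (by gcongr)]
    _ = 16 * K ^ 2 * μ * r / (d * L ^ 2) := by
        rw [mul_pow, Real.sq_sqrt hμ, div_pow, mul_pow, Real.sq_sqrt r.cast_nonneg]
        ring

end Normalized

/-- properties of the columns of `V⋆ = Ũ (ŨᵀŨ)⁻¹`. -/
theorem statement14 :
    ∀ K : ℝ, 1 ≤ K → ∃ C > (0 : ℝ),
      ∀ (d r : ℕ) (μ : ℝ) (U : Matrix (Fin d) (Fin r) ℝ),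
        Incoherent μ U → 0 < lamMin U → lamMax U ≤ K * lamMin U →
        IsUnit (gram U).det →
        (∀ x : Fin r → ℝ,
          (lamMin U ^ ((2 : ℝ) / 3) / 2) ^ 2 * ∑ l, x l ^ 2 ≤
            ∑ ij : Fin d × Fin d, (lift U).mulVec x ij ^ 2) →
        ∀ l : Fin r,
          (Real.sqrt
              (∑ ij : Fin d × Fin d,
                (Vmat U ij l - (norm2 (colU U l) ^ 4)⁻¹ * lift U ij l) ^ 2) ≤
            C * μ * r / (d * lamMin U ^ ((2 : ℝ) / 3))) ∧
          (|Real.sqrt (∑ ij : Fin d × Fin d, Vmat U ij l ^ 2) -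
              (norm2 (colU U l) ^ 2)⁻¹| ≤
            C * μ * r / (d * lamMin U ^ ((2 : ℝ) / 3))) ∧
          ((⨆ ij : Fin d × Fin d, |Vmat U ij l|) ≤
            C * μ * Real.sqrt r / (d * lamMin U ^ ((2 : ℝ) / 3))) ∧
          ∀ i : Fin d,
            (∑ k : Fin d, Vmat U (i, k) l ^ 2) ≤
              C * μ * r / (d * lamMin U ^ ((4 : ℝ) / 3)) := by
  intro K hK
  refine ⟨16 * K ^ 2, by positivity, fun d r μ U hU hlam hκ hdet hσ l => ?_⟩
  set L := lamMin U ^ ((2 : ℝ) / 3)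
  have hL : 0 < L := Real.rpow_pos_of_pos hlam _
  have hl := norm2_colU_pos hlam l
  have hμ := hU.pos hl
  have hup := sq_norm2_le_mul_lamMin_rpow hK hκ
  have hKl a : norm2 (colU U a) ^ 2 ≤ K * norm2 (colU U l) ^ 2 :=
    (hup a).trans (by gcongr; exact lamMin_rpow_le_sq_norm2 U l)
  have hsum := sum_sq_norm2_mul_abs_inv_gram_le_of_lower hL hσ hdet hup l
  have hdiff : norm2 ((Vmat U).col l - (norm2 (colU U l) ^ 4)⁻¹ • (lift U).col l) ≤
      16 * K ^ 2 * μ * r / (d * L) :=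
    (hU.norm2_vmat_col_sub_le_of_lower hL hσ hdet hl hKl).trans <| by
      gcongr ?_ * μ * ?_ / _
      · nlinarith
      · exact Real.sqrt_le_self_iff.mpr (Or.inr (Nat.one_le_cast.mpr l.pos))
  refine ⟨hdiff, (abs_norm2_vmat_col_sub_le hl).trans hdiff, ?_, fun i => ?_⟩
  · refine Real.iSup_le (fun ij => (hU.abs_vmat_le_of_lower hl hsum ij).trans ?_)
      (by positivity)
    gcongr ?_ * μ * √r / _
    nlinarith
  · rw [show lamMin U ^ ((4 : ℝ) / 3) = L ^ 2 by
      rw [← Real.rpow_natCast, ← Real.rpow_mul hlam.le]; norm_num]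
    exact hU.sum_vmat_row_sq_le_of_lower hl hsum i

end TC
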